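/- arXiv:2312.01417 — 2 statements merged into one kernel-verified Lean document; each statement's English description precedes it below -/
import Mathlib

section
/- The number of integer points of the Gelfand–Zetlin polytope GZ(λ) equals the product ∏_{1 ≤ i < j ≤ n} (λ_i − λ_j + j − i)/(j − i) (Weyl dimension formula). -/
/-!
Deleting the top row of a Gelfand–Zetlin pattern with top row `λ` leaves a pattern one size
smaller, whose top row `μ` interlaces `λ`; hence the number of patterns satisfies
`N(λ) = ∑_μ N(μ)`. The Weyl product is `V(i - λᵢ) / V(i)` with `V` the Vandermonde determinant,
and it obeys the same recursion: for `aᵢ = i - λᵢ` the interlacing `μ` correspond to the points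
`b` of the box `∏ [aᵢ, aᵢ₊₁)`, and `V(a) = n! ∑_b V(b)`. The last identity comes from writing `V`
in the falling-factorial basis and subtracting consecutive rows: since `x(x-1)⋯(x-j)/(j+1)` is a
discrete antiderivative of `x(x-1)⋯(x-j+1)`, each new row is `j+1` times a sum over an interval, and
the determinant is multilinear in the rows.
-/

open Finset Matrix Polynomial Nat

theorem Int.sum_Ico_sub {M : Type*} [AddCommGroup M] (f : ℤ → M) {l u : ℤ} (h : l ≤ u) :
    ∑ x ∈ Ico l u, (f (x + 1) - f x) = f u - f l := by
  induction u, h using Int.leInduction with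
  | base => simp
  | succ u hlu ih =>
    rw [← insert_Ico_right_eq_Ico_add_one hlu, sum_insert (by simp), ih]
    abel

theorem descPochhammer_eval_add_one_sub {R : Type*} [CommRing R] (j : ℕ) (x : R) :
    (descPochhammer R (j + 1)).eval (x + 1) - (descPochhammer R (j + 1)).eval x =
      (j + 1) * (descPochhammer R j).eval x := by
  rw [descPochhammer_succ_eval j x, descPochhammer_succ_left]
  simp only [eval_mul, eval_X, eval_comp, eval_sub, eval_one, add_sub_cancel_right]
  ring

theorem mul_sum_Ico_descPochhammer_eval (j : ℕ) {l u : ℤ} (h : l ≤ u) :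
    (j + 1) * ∑ x ∈ Ico l u, (descPochhammer ℤ j).eval x =
      (descPochhammer ℤ (j + 1)).eval u - (descPochhammer ℤ (j + 1)).eval l := by
  rw [mul_sum, ← Int.sum_Ico_sub (fun x => (descPochhammer ℤ (j + 1)).eval x) h]
  simp only [descPochhammer_eval_add_one_sub]

theorem Fin.prod_univ_add_one_eq_factorial (n : ℕ) : ∏ j : Fin n, ((j : ℕ) + 1 : ℤ) = n ! := by
  exact_mod_cast (prod_univ_eq_prod_range (fun j => j + 1) n).trans
    (prod_range_add_one_eq_factorial n)

namespace Matrix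

theorem det_of_sum_row {m ι R : Type*} [Fintype m] [DecidableEq m] [DecidableEq ι]
    [CommRing R] (s : m → Finset ι) (g : ι → m → R) :
    (of fun i j => ∑ x ∈ s i, g x j).det =
      ∑ b ∈ Fintype.piFinset s, (of fun i j => g (b i) j).det := by
  convert (detRowAlternating : (m → R) [⋀^m]→ₗ[R] R).map_sum_finset (fun _ x => g x) s using 1
  · exact congrArg det (funext fun i => (sum_fn (s i) g).symm)
  · rfl

theorem det_vandermonde_eq_det_descPochhammer {R : Type*} [CommRing R] [IsDomain R] {n : ℕ}
    (v : Fin n → R) :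
    (vandermonde v).det = (of fun i j : Fin n => (descPochhammer R j).eval (v i)).det :=
  det_eval_matrixOfPolynomials_eq_det_vandermonde v _ (fun j => descPochhammer_natDegree R j)
    (fun j => monic_descPochhammer R j)

theorem det_vandermonde_eq_factorial_mul_sum {n : ℕ} (a : Fin (n + 1) → ℤ) (ha : Monotone a) :
    (vandermonde a).det =
      n ! * ∑ b ∈ Fintype.piFinset (fun i : Fin n => Ico (a i.castSucc) (a i.succ)),
        (vandermonde b).det := by
  set P : ℕ → ℤ → ℤ := fun j x => (descPochhammer ℤ j).eval x
  have hrows : (of fun i j : Fin (n + 1) => P j (a i)).det =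
      (of fun i j : Fin n => P (j + 1) (a i.succ) - P (j + 1) (a i.castSucc)).det := by
    rw [det_eq_of_forall_row_eq_smul_add_pred (A := of fun i j => P j (a i)) (fun _ => 1)
      (B := of (Fin.cases (fun j => P j (a 0)) fun i j => P j (a i.succ) - P j (a i.castSucc)))
      (fun j => rfl) (fun i j => by simp), det_succ_column_zero, Fin.sum_univ_succ]
    simp [P, submatrix]
  have htelescope : (of fun i j : Fin n => P (j + 1) (a i.succ) - P (j + 1) (a i.castSucc)) =
      of fun i j : Fin n => ((j : ℕ) + 1 : ℤ) * ∑ x ∈ Ico (a i.castSucc) (a i.succ), P j x := by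
    ext i j
    exact (mul_sum_Ico_descPochhammer_eval j (ha (Fin.castSucc_le_succ i))).symm
  have hfactorial := det_mul_row (fun j : Fin n => ((j : ℕ) + 1 : ℤ))
    (of fun i j : Fin n => ∑ x ∈ Ico (a i.castSucc) (a i.succ), P j x)
  simp only [of_apply, Fin.prod_univ_add_one_eq_factorial] at hfactorial
  rw [det_vandermonde_eq_det_descPochhammer, hrows, htelescope, hfactorial, det_of_sum_row]
  simp only [det_vandermonde_eq_det_descPochhammer, P]

theorem det_vandermonde_natCast_succ (n : ℕ) :
    (vandermonde fun i : Fin (n + 1) => (i : ℤ)).det =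
      n ! * (vandermonde fun i : Fin n => (i : ℤ)).det := by
  cases n with
  | zero => simp
  | succ n => rw [det_vandermonde_id_eq_superFactorial, det_vandermonde_id_eq_superFactorial,
      superFactorial_succ, Nat.cast_mul]

theorem det_vandermonde_eq_prod_pairs {R : Type*} [CommRing R] (n : ℕ) (v : ℕ → R) :
    (vandermonde fun i : Fin n => v i).det =
      ∏ p ∈ (range n ×ˢ range n).filter (fun p => p.1 < p.2), (v p.2 - v p.1) := by
  rw [det_vandermonde, prod_filter, prod_product, ← Fin.prod_univ_eq_prod_range]
  refine prod_congr rfl fun i _ => ?_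
  rw [← Fin.prod_univ_eq_prod_range (fun j => if (i : ℕ) < j then v j - v i else 1),
    ← prod_filter]
  simp only [Fin.val_fin_lt, filter_lt_eq_Ioi]

end Matrix

namespace GelfandZetlin

def IsPattern (n : ℕ) (lam : ℕ → ℤ) (y : ℕ → ℕ → ℤ) : Prop :=
  (∀ j, j < n → y 0 j = lam (n - 1 - j)) ∧
  (∀ i j, 1 ≤ i → i + j < n → y (i-1) j ≤ y i j ∧ y i j ≤ y (i-1) (j+1)) ∧
  (∀ i j, n ≤ i + j → y i j = 0)

def topRow (n : ℕ) (lam : ℕ → ℤ) : ℕ → ℤ := fun j => if j < n then lam (n - 1 - j) else 0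

def consRow (r : ℕ → ℤ) (y : ℕ → ℕ → ℤ) : ℕ → ℕ → ℤ
  | 0 => r
  | i + 1 => y i

/-- Rows of a pattern are stored increasingly; this reads row `1` backwards, in the
decreasing convention of `lam`. -/
def secondRow (n : ℕ) (y : ℕ → ℕ → ℤ) : Fin n → ℤ := fun i => y 1 (n - 1 - i)

def extendByZero {n : ℕ} (μ : Fin n → ℤ) : ℕ → ℤ := fun k => if h : k < n then μ ⟨k, h⟩ else 0

@[simp]
theorem extendByZero_val {n : ℕ} (μ : Fin n → ℤ) (i : Fin n) : extendByZero μ i = μ i := by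
  simp [extendByZero]

noncomputable def interlacingBox (n : ℕ) (lam : ℕ → ℤ) : Finset (Fin n → ℤ) :=
  Fintype.piFinset fun i => Icc (lam (i + 1)) (lam i)

theorem isPattern_zero_iff {lam : ℕ → ℤ} {y : ℕ → ℕ → ℤ} : IsPattern 0 lam y ↔ y = 0 := by
  refine ⟨fun h => funext₂ fun i j => h.2.2 i j (Nat.zero_le _), ?_⟩
  rintro rfl
  exact ⟨fun j hj => absurd hj j.not_lt_zero, fun i j _ hij => absurd hij (i + j).not_lt_zero,
    fun _ _ _ => rfl⟩

theorem isPattern_succ_iff {n : ℕ} {lam : ℕ → ℤ} {y : ℕ → ℕ → ℤ} :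
    IsPattern (n + 1) lam y ↔
      y 0 = topRow (n + 1) lam ∧ secondRow n y ∈ interlacingBox n lam ∧
        IsPattern n (extendByZero (secondRow n y)) (fun i => y (i + 1)) := by
  simp only [interlacingBox, Fintype.mem_piFinset, mem_Icc, secondRow]
  constructor
  · rintro ⟨htop, hint, hzero⟩
    refine ⟨funext fun j => ?_, fun i => ?_, fun j hj => ?_, fun i j hi hij => ?_,
      fun i j hij => hzero (i + 1) j (by omega)⟩
    · unfold topRow
      split_ifs with hj
      exacts [htop j hj, hzero 0 j (by omega)]
    · have h := hint 1 (n - 1 - i) le_rfl (by omega)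
      rw [htop _ (by omega), htop _ (by omega)] at h
      rwa [show n + 1 - 1 - (n - 1 - i) = i + 1 by omega,
        show n + 1 - 1 - (n - 1 - i + 1) = i by omega] at h
    · simp only [extendByZero, dif_pos (by omega : n - 1 - j < n)]
      congr 1
      dsimp only
      omega
    · simpa [show i - 1 + 1 = i by omega] using hint (i + 1) j (by omega) (by omega)
  · rintro ⟨htop, hbox, -, hint, hzero⟩
    refine ⟨fun j hj => by simp [htop, topRow, hj], fun i j hi hij => ?_, fun i j hij => ?_⟩
    · obtain rfl | hi := eq_or_lt_of_le hi
      · have h := hbox ⟨n - 1 - j, by omega⟩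
        simp only at h
        simp only [htop, topRow, if_pos (by omega : j < n + 1), if_pos (by omega : j + 1 < n + 1)]
        rwa [show n - 1 - (n - 1 - j) = j by omega, show n - 1 - j + 1 = n + 1 - 1 - j by omega,
          show n - 1 - j = n + 1 - 1 - (j + 1) by omega] at h
      · simpa [show i - 1 - 1 + 1 = i - 1 by omega, show i - 1 + 1 = i by omega]
          using hint (i - 1) j (by omega) (by omega)
    · cases i with
      | zero => simp [htop, topRow, show ¬ j < n + 1 by omega]
      | succ i => exact hzero i j (by omega)

theorem secondRow_consRow {n : ℕ} {μ : Fin n → ℤ} {y : ℕ → ℕ → ℤ}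
    (hy : IsPattern n (extendByZero μ) y) {r : ℕ → ℤ} : secondRow n (consRow r y) = μ := by
  funext i
  have hi := i.isLt
  simp only [secondRow, consRow, hy.1 _ (by omega : n - 1 - i < n), extendByZero,
    dif_pos (by omega : n - 1 - (n - 1 - i) < n)]
  congr 1
  ext
  simp only
  omega

theorem isPattern_consRow {n : ℕ} {lam : ℕ → ℤ} {μ : Fin n → ℤ} {y : ℕ → ℕ → ℤ}
    (hμ : μ ∈ interlacingBox n lam) (hy : IsPattern n (extendByZero μ) y) :
    IsPattern (n + 1) lam (consRow (topRow (n + 1) lam) y) :=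
  isPattern_succ_iff.2 ⟨rfl, by rwa [secondRow_consRow hy], by rwa [secondRow_consRow hy]⟩

def isPatternSuccEquiv (n : ℕ) (lam : ℕ → ℤ) :
    {y // IsPattern (n + 1) lam y} ≃
      Σ μ : interlacingBox n lam, {y // IsPattern n (extendByZero μ.1) y} where
  toFun y :=
    have hy := isPattern_succ_iff.1 y.2
    ⟨⟨secondRow n y, hy.2.1⟩, ⟨fun i => y.1 (i + 1), hy.2.2⟩⟩
  invFun p := ⟨consRow (topRow (n + 1) lam) p.2, isPattern_consRow p.1.2 p.2.2⟩
  left_inv y := by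
    refine Subtype.ext (funext fun i => ?_)
    cases i with
    | zero => exact (isPattern_succ_iff.1 y.2).1.symm
    | succ i => rfl
  right_inv p :=
    Sigma.subtype_ext (Subtype.ext (secondRow_consRow p.2.2 (r := topRow (n + 1) lam))) rfl

instance (n : ℕ) (lam : ℕ → ℤ) : Finite {y // IsPattern n lam y} := by
  induction n generalizing lam with
  | zero => exact Finite.of_equiv _ (Equiv.subtypeEquivRight fun _ => isPattern_zero_iff).symm
  | succ n ih => exact Finite.of_equiv _ (isPatternSuccEquiv n lam).symm

theorem card_isPattern_zero (lam : ℕ → ℤ) : Nat.card {y // IsPattern 0 lam y} = 1 := by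
  rw [Nat.card_congr (Equiv.subtypeEquivRight fun _ => isPattern_zero_iff), Nat.card_unique]

theorem card_isPattern_succ (n : ℕ) (lam : ℕ → ℤ) :
    Nat.card {y // IsPattern (n + 1) lam y} =
      ∑ μ ∈ interlacingBox n lam, Nat.card {y // IsPattern n (extendByZero μ) y} := by
  rw [Nat.card_congr (isPatternSuccEquiv n lam), Nat.card_sigma]
  exact sum_coe_sort _ fun μ => Nat.card {y // IsPattern n (extendByZero μ) y}

theorem extendByZero_anti_of_mem_interlacingBox {n : ℕ} {lam : ℕ → ℤ}
    (hlam : ∀ i j : ℕ, i ≤ j → j < n + 1 → lam j ≤ lam i) {μ : Fin n → ℤ}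
    (hμ : μ ∈ interlacingBox n lam) :
    ∀ i j : ℕ, i ≤ j → j < n → extendByZero μ j ≤ extendByZero μ i := by
  intro i j hij hj
  simp only [interlacingBox, Fintype.mem_piFinset, mem_Icc] at hμ
  simp only [extendByZero, dif_pos hj, dif_pos (hij.trans_lt hj)]
  obtain rfl | hij := eq_or_lt_of_le hij
  · rfl
  · linarith [(hμ ⟨j, hj⟩).2, (hμ ⟨i, by omega⟩).1, hlam (i + 1) j hij (by omega)]

theorem sum_interlacingBox_eq_sum_Ico {M : Type*} [AddCommMonoid M] (n : ℕ) (lam : ℕ → ℤ)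
    (f : (Fin n → ℤ) → M) :
    ∑ μ ∈ interlacingBox n lam, f (fun i => i - μ i) =
      ∑ b ∈ Fintype.piFinset (fun i : Fin n => Ico ((i : ℤ) - lam i) ((i : ℤ) + 1 - lam (i + 1))),
        f b := by
  refine sum_nbij' (fun μ i => i - μ i) (fun b i => i - b i) ?_ ?_ ?_ ?_ fun _ _ => rfl
  · simp only [interlacingBox, Fintype.mem_piFinset, mem_Icc, mem_Ico]
    intro μ hμ i
    have := hμ i
    omega
  · simp only [interlacingBox, Fintype.mem_piFinset, mem_Icc, mem_Ico]
    intro b hb i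
    have := hb i
    omega
  · intro μ _
    simp
  · intro b _
    simp

theorem card_isPattern_mul_det_vandermonde (n : ℕ) (lam : ℕ → ℤ)
    (hlam : ∀ i j : ℕ, i ≤ j → j < n → lam j ≤ lam i) :
    (Nat.card {y // IsPattern n lam y} : ℤ) * (vandermonde fun i : Fin n => (i : ℤ)).det =
      (vandermonde fun i : Fin n => (i : ℤ) - lam i).det := by
  induction n generalizing lam with
  | zero => simp [card_isPattern_zero]
  | succ n ih =>
    have hmono : Monotone fun i : Fin (n + 1) => (i : ℤ) - lam i := fun i j hij => by
      have := hlam i j hij j.isLt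
      simp only [Fin.le_def] at hij
      dsimp only
      omega
    rw [card_isPattern_succ, det_vandermonde_natCast_succ,
      det_vandermonde_eq_factorial_mul_sum _ hmono]
    simp only [Fin.val_castSucc, Fin.val_succ, Nat.cast_add, Nat.cast_one]
    rw [← sum_interlacingBox_eq_sum_Ico, Nat.cast_sum, sum_mul, mul_sum]
    refine sum_congr rfl fun μ hμ => ?_
    rw [mul_left_comm, ih _ (extendByZero_anti_of_mem_interlacingBox hlam hμ)]
    simp

end GelfandZetlin

/-- **Weyl dimension formula for GZ patterns.**  The number of
Gelfand–Zetlin patterns (triangular integer arrays `y i j` defined for `i + j < n`,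
row `0` being the fixed top row `(λ_n, …, λ_1)`, satisfying the interlacing
inequalities `y (i-1) j ≤ y i j ≤ y (i-1) (j+1)`; entries outside the triangle are
normalized to `0` so that the set is finite) equals
`∏_{1 ≤ i < j ≤ n} (λ_i - λ_j + j - i)/(j - i)`, stated here with denominators
cleared. -/
theorem gz_pattern_count_weyl (n : ℕ) (lam : ℕ → ℤ)
    (hlam : ∀ i j : ℕ, i ≤ j → j < n → lam j ≤ lam i) :
    (Nat.card {y : ℕ → ℕ → ℤ //
        (∀ j, j < n → y 0 j = lam (n - 1 - j)) ∧
        (∀ i j, 1 ≤ i → i + j < n → y (i-1) j ≤ y i j ∧ y i j ≤ y (i-1) (j+1)) ∧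
        (∀ i j, n ≤ i + j → y i j = 0)} : ℤ) *
      ∏ p ∈ (Finset.range n ×ˢ Finset.range n).filter (fun p => p.1 < p.2),
        ((p.2 : ℤ) - (p.1 : ℤ)) =
    ∏ p ∈ (Finset.range n ×ˢ Finset.range n).filter (fun p => p.1 < p.2),
      (lam p.1 - lam p.2 + (p.2 : ℤ) - (p.1 : ℤ)) := by
  rw [← det_vandermonde_eq_prod_pairs n (fun i => (i : ℤ)),
    prod_congr rfl fun p _ => (by ring : lam p.1 - lam p.2 + (p.2 : ℤ) - p.1 =
      ((p.2 : ℤ) - lam p.2) - ((p.1 : ℤ) - lam p.1)),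
    ← det_vandermonde_eq_prod_pairs n (fun i => (i : ℤ) - lam i)]
  exact GelfandZetlin.card_isPattern_mul_det_vandermonde n lam hlam
end

section
/- In an enhanced Gelfand–Zetlin pattern, every connected component of the edge graph has a unique highest vertex or contains an entry from the first row; more precisely, no connected component contains two distinct entries in the same row that are both highest vertices of that component. -/
/-- Adjacency relation on positions `(i, j)` (row `i`, column `j`) of a triangular
array, determined by the edge predicates `eUL` (an edge from `(i,j)` up-left to
`(i-1,j)`) and `eUR` (an edge from `(i,j)` up-right to `(i-1,j+1)`). -/
def adjOf (eUL eUR : ℕ → ℕ → Prop) (p q : ℕ × ℕ) : Prop :=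
  (q.1 = p.1 + 1 ∧ ((q.2 = p.2 ∧ eUL q.1 q.2) ∨ (p.2 = q.2 + 1 ∧ eUR q.1 q.2))) ∨
  (p.1 = q.1 + 1 ∧ ((p.2 = q.2 ∧ eUL p.1 p.2) ∨ (q.2 = p.2 + 1 ∧ eUR p.1 p.2)))

/-- An enhanced Gelfand–Zetlin pattern (Definition 2.6 of Presnova–Smirnov): a
triangular integer array `a i j` (rows `i = 0, …, n-1`, valid positions `i + j < n`,
row `0` being the top row), together with a set of encircled entries `circ` and sets
of edges `edgeUL`, `edgeUR` joining equal neighboring entries in consecutive rows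
(`edgeUL i j` joins `(i,j)` with `(i-1,j)`, and `edgeUR i j` joins `(i,j)` with
`(i-1,j+1)`), subject to conditions (1)–(8). -/
structure EnhancedGZ (n : ℕ) where
  a : ℕ → ℕ → ℤ
  circ : ℕ → ℕ → Prop
  edgeUL : ℕ → ℕ → Prop
  edgeUR : ℕ → ℕ → Prop
  /-- interlacing inequalities of a GZ pattern -/
  interlace : ∀ i j, 1 ≤ i → i + j < n → a (i-1) j ≤ a i j ∧ a i j ≤ a (i-1) (j+1)
  edgeUL_valid : ∀ i j, edgeUL i j → 1 ≤ i ∧ i + j < n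
  edgeUR_valid : ∀ i j, edgeUR i j → 1 ≤ i ∧ i + j < n
  /-- (1) entries of the first row are encircled -/
  cond1 : ∀ j, j < n → circ 0 j
  /-- (2) entries joined by an edge are equal, and the bottom one is encircled -/
  cond2UL : ∀ i j, edgeUL i j → a i j = a (i-1) j ∧ circ i j
  cond2UR : ∀ i j, edgeUR i j → a i j = a (i-1) (j+1) ∧ circ i j
  /-- (3) two row-neighbors are joined to the entry above them iff they are joined
  to the entry below them -/
  cond3 : ∀ i j, 1 ≤ i → (i + 1) + j < n →
    ((edgeUR i j ∧ edgeUL i (j+1)) ↔ (edgeUL (i+1) j ∧ edgeUR (i+1) j))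
  /-- (4) two equal entries in the first row are joined to the entry below them -/
  cond4 : ∀ j, j + 1 < n → a 0 j = a 0 (j+1) → circ 1 j ∧ edgeUL 1 j ∧ edgeUR 1 j
  /-- (5) in a triangle `(a, b; a)` with `a < b`, the bottom entry is encircled and
  joined to the upper-left entry -/
  cond5 : ∀ i j, 1 ≤ i → i + j < n → a (i-1) j < a (i-1) (j+1) → a i j = a (i-1) j →
    circ i j ∧ edgeUL i j
  /-- (6) in a triangle `(a, b; b)` with `a < b` and encircled bottom entry, there is
  an edge to the upper-right entry -/
  cond6 : ∀ i j, 1 ≤ i → i + j < n → a (i-1) j < a (i-1) (j+1) → a i j = a (i-1) (j+1) →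
    circ i j → edgeUR i j
  /-- (7) in a triangle `(a, a; a)` whose two top entries are connected by a path of
  edges, the bottom entry is encircled and joined to both -/
  cond7 : ∀ i j, 1 ≤ i → i + j < n → a (i-1) j = a i j → a (i-1) (j+1) = a i j →
    Relation.ReflTransGen (adjOf edgeUL edgeUR) (i-1, j) (i-1, j+1) →
    circ i j ∧ edgeUL i j ∧ edgeUR i j
  /-- (8) in a triangle `(a, a; a)` with encircled bottom entry, the bottom entry is
  joined to at least one of the top entries -/
  cond8 : ∀ i j, 1 ≤ i → i + j < n → a (i-1) j = a i j → a (i-1) (j+1) = a i j →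
    circ i j → edgeUL i j ∨ edgeUR i j

/-! Inside the component of a highest entry `p` in a row `i ≥ 1`, consider moving from an entry
to an entry joined to it in the row above. These moves are locally confluent: if an entry is
joined to both entries above it, condition (3) joins those two to the entry above them, and that
entry lies in the component, hence in a row `≥ i`. Every edge is a move in one direction, and
neither `p` nor `q` admits a move, so by Church–Rosser they coincide. -/

namespace Relation

variable {α : Type*} {r : α → α → Prop} {a b : α}

theorem eq_of_eqvGen_of_normal
    (h : ∀ a b c, r a b → r a c → ∃ d, ReflGen r b d ∧ ReflTransGen r c d)
    (hab : EqvGen r a b) (ha : ∀ c, ¬r a c) (hb : ∀ c, ¬r b c) : a = b := by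
  have hjoin : SymmGen r ≤ Join (ReflTransGen r) := fun x y hxy =>
    hxy.elim (fun hr => ⟨y, .single hr, .refl⟩) (fun hr => ⟨x, .refl, .single hr⟩)
  rw [← EqvGen.reflTransGen_symmGen] at hab
  obtain ⟨c, hac, hbc⟩ :=
    reflTransGen_le_of_equivalence_of_le (equivalence_join_reflTransGen h) hjoin a b hab
  rw [reflTransGen_iff_eq ha] at hac
  rw [reflTransGen_iff_eq hb] at hbc
  exact hac ▸ hbc

end Relation

open Relation

def adjUp (eUL eUR : ℕ → ℕ → Prop) (p q : ℕ × ℕ) : Prop :=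
  adjOf eUL eUR p q ∧ q.1 + 1 = p.1

section adjUp

variable {eUL eUR : ℕ → ℕ → Prop} {p q : ℕ × ℕ}

theorem adjUp_iff :
    adjUp eUL eUR p q ↔
      p.1 = q.1 + 1 ∧ ((q.2 = p.2 ∧ eUL p.1 p.2) ∨ (q.2 = p.2 + 1 ∧ eUR p.1 p.2)) := by
  unfold adjUp adjOf
  constructor
  · rintro ⟨h | h, hrow⟩
    · omega
    · exact ⟨h.1, h.2.imp (fun h => ⟨h.1.symm, h.2⟩) id⟩
  · rintro ⟨hrow, h⟩
    exact ⟨.inr ⟨hrow, h.imp (fun h => ⟨h.1.symm, h.2⟩) id⟩, hrow.symm⟩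

theorem adjUp_or_adjUp_of_adjOf (h : adjOf eUL eUR p q) :
    adjUp eUL eUR p q ∨ adjUp eUL eUR q p := by
  have hsymm : adjOf eUL eUR q p := by unfold adjOf at *; tauto
  rcases h.imp And.left And.left with hrow | hrow
  · exact .inr ⟨hsymm, hrow.symm⟩
  · exact .inl ⟨h, hrow.symm⟩

end adjUp

namespace EnhancedGZ

variable {n : ℕ} (P : EnhancedGZ n)

theorem adjUp_apex_of_edgeUL_of_edgeUR {i j : ℕ}
    (hUL : P.edgeUL (i + 2) j) (hUR : P.edgeUR (i + 2) j) :
    adjUp P.edgeUL P.edgeUR (i + 1, j) (i, j + 1) ∧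
      adjUp P.edgeUL P.edgeUR (i + 1, j + 1) (i, j + 1) := by
  obtain ⟨hUR', hUL'⟩ :=
    (P.cond3 (i + 1) j (by omega) (P.edgeUL_valid _ _ hUL).2).mpr ⟨hUL, hUR⟩
  exact ⟨adjUp_iff.mpr ⟨rfl, .inr ⟨rfl, hUR'⟩⟩, adjUp_iff.mpr ⟨rfl, .inl ⟨rfl, hUL'⟩⟩⟩

theorem exists_adjUp_of_adjUp {x u v : ℕ × ℕ}
    (hu : adjUp P.edgeUL P.edgeUR x u) (hv : adjUp P.edgeUL P.edgeUR x v)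
    (huv : u ≠ v) (hu0 : 0 < u.1) :
    ∃ y, adjUp P.edgeUL P.edgeUR u y ∧ adjUp P.edgeUL P.edgeUR v y := by
  obtain ⟨x1, j⟩ := x
  obtain ⟨u1, u2⟩ := u
  obtain ⟨v1, v2⟩ := v
  simp only [adjUp_iff] at hu hv hu0
  obtain ⟨i, rfl⟩ : ∃ i, u1 = i + 1 := ⟨u1 - 1, by omega⟩
  obtain ⟨rfl, hu⟩ := hu
  obtain ⟨hv1, hv⟩ := hv
  obtain rfl : v1 = i + 1 := by omega
  rcases hu with ⟨rfl, hUL⟩ | ⟨rfl, hUR⟩ <;> rcases hv with ⟨rfl, hUL'⟩ | ⟨rfl, hUR'⟩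
  · exact absurd rfl huv
  · exact ⟨_, P.adjUp_apex_of_edgeUL_of_edgeUR hUL hUR'⟩
  · exact ⟨_, (P.adjUp_apex_of_edgeUL_of_edgeUR hUL' hUR).symm⟩
  · exact absurd rfl huv

end EnhancedGZ

theorem enhancedGZ_unique_highest_general (n : ℕ) (P : EnhancedGZ n) (p q : ℕ × ℕ)
    (hconn : Relation.ReflTransGen (adjOf P.edgeUL P.edgeUR) p q)
    (hrow : p.1 = q.1)
    (hptop : ∀ r, Relation.ReflTransGen (adjOf P.edgeUL P.edgeUR) p r → p.1 ≤ r.1) :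
    p = q ∨ p.1 = 0 := by
  refine or_iff_not_imp_right.mpr fun hp0 => ?_
  let R x y := ReflTransGen (adjOf P.edgeUL P.edgeUR) p x ∧ adjUp P.edgeUL P.edgeUR x y
  have hdiamond : ∀ x u v, R x u → R x v → ∃ y, ReflGen R u y ∧ ReflTransGen R v y := by
    rintro x u v ⟨hx, hxu⟩ ⟨-, hxv⟩
    by_cases huv : u = v
    · exact ⟨v, huv ▸ .refl, .refl⟩
    have hu := hx.tail hxu.1
    obtain ⟨y, huy, hvy⟩ := P.exists_adjUp_of_adjUp hxu hxv huv (by have := hptop u hu; omega)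
    exact ⟨y, .single ⟨hu, huy⟩, .single ⟨hx.tail hxv.1, hvy⟩⟩
  have hzigzag : ∀ z, ReflTransGen (adjOf P.edgeUL P.edgeUR) p z → EqvGen R p z := by
    intro z hz
    induction hz with
    | refl => exact .refl p
    | @tail y z hy hyz ih =>
      refine ih.trans _ _ _ ?_
      rcases adjUp_or_adjUp_of_adjOf hyz with h | h
      · exact .rel _ _ ⟨hy, h⟩
      · exact .symm _ _ (.rel _ _ ⟨hy.tail hyz, h⟩)
  have hnormal : ∀ z, z.1 = p.1 → ∀ y, ¬R z y := by
    rintro z hz y ⟨hpz, hzy, hyz⟩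
    have := hptop y (hpz.tail hzy)
    omega
  exact eq_of_eqvGen_of_normal hdiamond (hzigzag q hconn) (hnormal p rfl) (hnormal q hrow.symm)

/-- In an enhanced Gelfand–Zetlin pattern, no connected component of
the edge graph contains two distinct entries in the same row that are both highest
vertices of the component — unless the component meets the first row. Hence every
connected component has a unique highest vertex or contains a first-row entry. -/
theorem enhancedGZ_unique_highest (n : ℕ) (P : EnhancedGZ n) (p q : ℕ × ℕ)
    (hp : p.1 + p.2 < n) (hq : q.1 + q.2 < n)
    (hconn : Relation.ReflTransGen (adjOf P.edgeUL P.edgeUR) p q)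
    (hrow : p.1 = q.1)
    (hptop : ∀ r, Relation.ReflTransGen (adjOf P.edgeUL P.edgeUR) p r → p.1 ≤ r.1)
    (hqtop : ∀ r, Relation.ReflTransGen (adjOf P.edgeUL P.edgeUR) q r → q.1 ≤ r.1) :
    p = q ∨ p.1 = 0 :=
  enhancedGZ_unique_highest_general n P p q hconn hrow hptop
end
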